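/- arXiv:2106.04379 — 3 statements merged into one kernel-verified Lean document; each statement's English description precedes it below -/
import Mathlib

section
/- (Backwards KI sub-claim from the Appendix D proof.) Fix a timestep t and a policy π ∈ Π_φ, and suppose the Inverse Model condition (I_{φ,t}^π(a|z',z) = I_t^π(a|x',x) for all a ∈ A, z, z' ∈ Z, x ∈ z, x' ∈ z') and the Strong Density Ratio condition (P_t^π(x'|x)/P_t^π(x') = P_{φ,t}^π(z'|z)/P_{φ,t}^π(z') for all z, z' ∈ Z and all x ∈ z, x' ∈ z') hold. Then for all a ∈ A, all x ∈ X, and all x₁', x₂' ∈ X with φ(x₁') = φ(x₂'): P_t^π(x, a | x₁') = P_t^π(x, a | x₂'), where P_t^π(x, a | x') = T(x'|a,x) π_t(a|x) P_t^π(x) / Σ_{x̃∈X} Σ_{ã∈A} T(x'|ã,x̃) π_t(ã|x̃) P_t^π(x̃). -/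
namespace MarkovAbstraction

noncomputable section

variable {X A Z : Type*} [Fintype X] [Fintype A] [Fintype Z] [DecidableEq Z]

/-- `T x' a x` is the probability of transitioning to `x'` given action `a` in state `x`;
`T (· | a, x)` must be a probability distribution for each `a, x`. -/
def IsKernel (T : X → A → X → ℝ) : Prop :=
  (∀ x' a x, 0 ≤ T x' a x) ∧ ∀ a x, ∑ x' : X, T x' a x = 1

/-- `π t a x` is the probability of choosing action `a` in state `x` at timestep `t`. -/
def IsPolicy (π : ℕ → A → X → ℝ) : Prop :=
  (∀ t a x, 0 ≤ π t a x) ∧ ∀ t x, ∑ a : A, π t a x = 1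

/-- A probability distribution over ground states. -/
def IsDist (P0 : X → ℝ) : Prop :=
  (∀ x, 0 ≤ P0 x) ∧ ∑ x : X, P0 x = 1

/-- Membership in the policy class `Π_φ`: the policy assigns equal action probabilities to
ground states with the same abstract state. -/
def InPolicyClass (φ : X → Z) (π : ℕ → A → X → ℝ) : Prop :=
  ∀ t a x₁ x₂, φ x₁ = φ x₂ → π t a x₁ = π t a x₂

/-- State visitation distribution `P_t^π(x)`. -/
def Pvis (T : X → A → X → ℝ) (π : ℕ → A → X → ℝ) (P0 : X → ℝ) : ℕ → X → ℝ
  | 0 => P0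
  | t + 1 => fun x => ∑ a : A, ∑ xp : X, T x a xp * π t a xp * Pvis T π P0 t xp

/-- Belief distribution `B_{φ,t}^π(x|z)`. -/
def Bel0 (T : X → A → X → ℝ) (π : ℕ → A → X → ℝ) (P0 : X → ℝ) (φ : X → Z)
    (t : ℕ) (z : Z) (x : X) : ℝ :=
  (if φ x = z then Pvis T π P0 t x else 0) /
    ∑ xt : X, if φ xt = z then Pvis T π P0 t xt else 0

/-- `k`-step belief distribution `B_{φ,t}^{π(k)}(x | z_t, {a_{t-i}, z_{t-i}}_{i=1}^k)`,
where the history `[(a_{t-1}, z_{t-1}), ..., (a_{t-k}, z_{t-k})]` is listed most recent first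
(so `k` is the length of the history list, and the empty history gives `B_{φ,t}^{π(0)} = B_{φ,t}^π`). -/
def BelK (T : X → A → X → ℝ) (π : ℕ → A → X → ℝ) (P0 : X → ℝ) (φ : X → Z)
    (t : ℕ) : List (A × Z) → Z → X → ℝ
  | [], z, x => Bel0 T π P0 φ t z x
  | (a, zp) :: h, z, x =>
      (if φ x = z then ∑ xp : X, T x a xp * BelK T π P0 φ t h zp xp else 0) /
        ∑ xt : X, if φ xt = z then
            ∑ xtp : X, if φ xtp = zp then T xt a xtp * BelK T π P0 φ t h zp xtp else 0
          else 0

/-- Expected next-state dynamics `P_t^π(x'|x)`. -/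
def PNext (T : X → A → X → ℝ) (π : ℕ → A → X → ℝ) (t : ℕ) (x' x : X) : ℝ :=
  ∑ a : A, T x' a x * π t a x

/-- Inverse dynamics model `I_t^π(a|x',x)`. -/
def InvModel (T : X → A → X → ℝ) (π : ℕ → A → X → ℝ) (t : ℕ) (a : A) (x' x : X) : ℝ :=
  T x' a x * π t a x / PNext T π t x' x

/-- `P_t^π(x'|z) = Σ_{x̃} P_t^π(x'|x̃) B_{φ,t}^π(x̃|z)`. -/
def PNextZ (T : X → A → X → ℝ) (π : ℕ → A → X → ℝ) (P0 : X → ℝ) (φ : X → Z)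
    (t : ℕ) (x' : X) (z : Z) : ℝ :=
  ∑ x : X, PNext T π t x' x * Bel0 T π P0 φ t z x

/-- Abstract next-state dynamics `P_{φ,t}^π(z'|z) = Σ_{x'∈z'} P_t^π(x'|z)`. -/
def PZNext (T : X → A → X → ℝ) (π : ℕ → A → X → ℝ) (P0 : X → ℝ) (φ : X → Z)
    (t : ℕ) (z' z : Z) : ℝ :=
  ∑ x' : X, if φ x' = z' then PNextZ T π P0 φ t x' z else 0

/-- Abstract-state visitation distribution `P_{φ,t}^π(z') = Σ_{x'∈z'} P_t^π(x')`. -/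
def PZ (T : X → A → X → ℝ) (π : ℕ → A → X → ℝ) (P0 : X → ℝ) (φ : X → Z)
    (t : ℕ) (z' : Z) : ℝ :=
  ∑ x' : X, if φ x' = z' then Pvis T π P0 t x' else 0

/-- Abstract transition model `T_{φ,t}^π(z'|a,z)`. -/
def TZ (T : X → A → X → ℝ) (π : ℕ → A → X → ℝ) (P0 : X → ℝ) (φ : X → Z)
    (t : ℕ) (z' : Z) (a : A) (z : Z) : ℝ :=
  ∑ x' : X, if φ x' = z' then
      ∑ x : X, if φ x = z then T x' a x * Bel0 T π P0 φ t z x else 0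
    else 0

/-- Abstract inverse model `I_{φ,t}^π(a|z',z) = T_{φ,t}^π(z'|a,z) π_{φ,t}(a|z) / P_{φ,t}^π(z'|z)`,
where the common policy value `π_{φ,t}(a|z)` is given via a representative ground state `x ∈ z`
(well-defined when `π ∈ Π_φ`). -/
def InvModelZ (T : X → A → X → ℝ) (π : ℕ → A → X → ℝ) (P0 : X → ℝ) (φ : X → Z)
    (t : ℕ) (a : A) (z' z : Z) (x : X) : ℝ :=
  TZ T π P0 φ t z' a z * π t a x / PZNext T π P0 φ t z' z

/-- `C_{φ,t}^{π(k)}(x_t)` for a (history-conditioned) belief function `b`. -/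
def CK (π : ℕ → A → X → ℝ) (t : ℕ) (a : A) (b : X → ℝ) (x : X) : ℝ :=
  π t a x * b x / ∑ xt : X, π t a xt * b xt

/-- History-conditioned abstract transition model
`T_{φ,t}^{π(k)}(z₁ | a, z, history) = Σ_{x₁∈z₁} Σ_{x∈z} T(x₁|a,x) C_{φ,t}^{π(k)}(x)`,
where `b` is the corresponding history-conditioned belief. -/
def TK (T : X → A → X → ℝ) (φ : X → Z) (π : ℕ → A → X → ℝ)
    (t : ℕ) (a : A) (z : Z) (b : X → ℝ) (z1 : Z) : ℝ :=
  ∑ x1 : X, if φ x1 = z1 then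
      ∑ x : X, if φ x = z then T x1 a x * CK π t a b x else 0
    else 0

/-- History-conditioned abstract reward `R_{φ,t}^{π(k)}(z₁, a, z, history)`. -/
def RK (Rw T : X → A → X → ℝ) (φ : X → Z) (π : ℕ → A → X → ℝ)
    (t : ℕ) (a : A) (z : Z) (b : X → ℝ) (z1 : Z) : ℝ :=
  (∑ x1 : X, if φ x1 = z1 then
      ∑ x : X, if φ x = z then Rw x1 a x * T x1 a x * CK π t a b x else 0
    else 0) / TK T φ π t a z b z1

/-- Backwards dynamics `P_t^π(x, a | x')`. -/
def PBack (T : X → A → X → ℝ) (π : ℕ → A → X → ℝ) (P0 : X → ℝ)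
    (t : ℕ) (x : X) (a : A) (x' : X) : ℝ :=
  T x' a x * π t a x * Pvis T π P0 t x /
    ∑ xt : X, ∑ ap : A, T x' ap xt * π t ap xt * Pvis T π P0 t xt

end

/-!
By the Inverse Model condition, `T(x'|a,x) π(a|x) = I_φ(a|φ x',φ x) P(x'|x)`, and by the
Strong Density Ratio condition, `P(x'|x̃) = ρ(φ x', φ x̃) P(x')` with
`ρ(z',z) = P_φ(z'|z) / P_φ(z')`. Substituting both into the numerator and the normaliser of
`P(x, a | x')`, the common factor `P(x')` cancels, and what is left depends on `x'` only
through `φ x'`.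
-/

section BackwardsDynamics

variable {X A : Type*} [Fintype A] {T : X → A → X → ℝ} {π : ℕ → A → X → ℝ}
  {t : ℕ}

theorem invModel_mul_pNext {a : A} {x' x : X} (h : PNext T π t x' x ≠ 0) :
    InvModel T π t a x' x * PNext T π t x' x = T x' a x * π t a x :=
  div_mul_cancel₀ _ h

variable [Fintype X]

theorem pBack_eq_of_pNext_eq_mul {P0 : X → ℝ} {x x' : X} {a : A}
    (hP : Pvis T π P0 t x' ≠ 0) {ρ : X → ℝ}
    (hρ : ∀ xt, PNext T π t x' xt = ρ xt * Pvis T π P0 t x')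
    {ι : ℝ} (hι : T x' a x * π t a x = ι * PNext T π t x' x) :
    PBack T π P0 t x a x' =
      ι * ρ x * Pvis T π P0 t x / ∑ xt : X, ρ xt * Pvis T π P0 t xt := by
  have hden : ∑ xt : X, ∑ ap : A, T x' ap xt * π t ap xt * Pvis T π P0 t xt
      = Pvis T π P0 t x' * ∑ xt : X, ρ xt * Pvis T π P0 t xt := by
    rw [Finset.mul_sum]
    refine Finset.sum_congr rfl fun xt _ => ?_
    rw [← Finset.sum_mul, ← PNext, hρ]
    ring
  rw [PBack, hden, hι, hρ x, ← mul_div_mul_left (ι * ρ x * Pvis T π P0 t x) _ hP]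
  ring

end BackwardsDynamics

variable {X A Z : Type*} [Fintype X] [Fintype A] [Fintype Z] [DecidableEq Z]

theorem strong_markov_implies_backwards_KI_general
    (T : X → A → X → ℝ) (π : ℕ → A → X → ℝ) (P0 : X → ℝ) (φ : X → Z)
    (t : ℕ)
    -- positivity of the denominators appearing in the definitions:
    (hpos2 : ∀ x' x : X, 0 < PNext T π t x' x)
    (hpos3 : ∀ x : X, 0 < Pvis T π P0 t x)
    -- Inverse Model condition:
    (hInv : ∀ (a : A) (z z' : Z) (x x' : X), φ x = z → φ x' = z' →
      InvModelZ T π P0 φ t a z' z x = InvModel T π t a x' x)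
    -- Strong Density Ratio condition:
    (hStrong : ∀ (z z' : Z) (x x' : X), φ x = z → φ x' = z' →
      PNext T π t x' x / Pvis T π P0 t x'
        = PZNext T π P0 φ t z' z / PZ T π P0 φ t z') :
    ∀ (a : A) (x : X) (x1 x2 : X), φ x1 = φ x2 →
      PBack T π P0 t x a x1 = PBack T π P0 t x a x2 := by
  intro a x x1 x2 hx
  have hfactor : ∀ x' : X, PBack T π P0 t x a x' =
      InvModelZ T π P0 φ t a (φ x') (φ x) x *
        (PZNext T π P0 φ t (φ x') (φ x) / PZ T π P0 φ t (φ x')) * Pvis T π P0 t x /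
      ∑ xt : X,
        PZNext T π P0 φ t (φ x') (φ xt) / PZ T π P0 φ t (φ x') * Pvis T π P0 t xt :=
    fun x' => pBack_eq_of_pNext_eq_mul (hpos3 x').ne'
      (fun xt => (div_eq_iff (hpos3 x').ne').mp (hStrong _ _ xt x' rfl rfl))
      (by rw [hInv a _ _ x x' rfl rfl, invModel_mul_pNext (hpos2 x' x).ne'])
  rw [hfactor x1, hfactor x2, hx]

/-- **Backwards KI sub-claim (Appendix D).** For a fixed timestep `t` and policy `π ∈ Π_φ`,
the Inverse Model condition and the Strong Density Ratio condition imply backwards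
kinematic inseparability: ground states sharing an abstract state have equal backwards
dynamics `P_t^π(x, a | x')`. -/
theorem strong_markov_implies_backwards_KI
    (T : X → A → X → ℝ) (π : ℕ → A → X → ℝ) (P0 : X → ℝ) (φ : X → Z)
    (hT : IsKernel T) (hπ : IsPolicy π) (hP0 : IsDist P0)
    (hπΦ : InPolicyClass φ π) (t : ℕ)
    -- positivity of the denominators appearing in the definitions:
    (hpos1 : ∀ z : Z, 0 < ∑ x : X, if φ x = z then Pvis T π P0 t x else 0)
    (hpos2 : ∀ x' x : X, 0 < PNext T π t x' x)
    (hpos3 : ∀ x : X, 0 < Pvis T π P0 t x)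
    (hpos4 : ∀ z' z : Z, 0 < PZNext T π P0 φ t z' z)
    (hpos5 : ∀ z' : Z, 0 < PZ T π P0 φ t z')
    (hpos6 : ∀ x' : X,
      0 < ∑ xt : X, ∑ ap : A, T x' ap xt * π t ap xt * Pvis T π P0 t xt)
    -- Inverse Model condition:
    (hInv : ∀ (a : A) (z z' : Z) (x x' : X), φ x = z → φ x' = z' →
      InvModelZ T π P0 φ t a z' z x = InvModel T π t a x' x)
    -- Strong Density Ratio condition:
    (hStrong : ∀ (z z' : Z) (x x' : X), φ x = z → φ x' = z' →
      PNext T π t x' x / Pvis T π P0 t x'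
        = PZNext T π P0 φ t z' z / PZ T π P0 φ t z') :
    ∀ (a : A) (x : X) (x1 x2 : X), φ x1 = φ x2 →
      PBack T π P0 t x a x1 = PBack T π P0 t x a x2 :=
  strong_markov_implies_backwards_KI_general T π P0 φ t hpos2 hpos3 hInv hStrong

end MarkovAbstraction
end

section
/- (Inverse Model condition alone is insufficient; Section 4.2 counterexample.) There exist a finite MDP M = (X, A, R, T, γ) with deterministic transitions, an abstraction φ : X → Z, an initial state distribution P_0, and a policy π ∈ Π_φ such that: (i) the Inverse Model condition holds (I_{φ,t}^π(a|z',z) = I_t^π(a|x',x) for all a ∈ A, z, z' ∈ Z, x ∈ z, x' ∈ z', at every timestep t for which the relevant denominators are positive), but (ii) φ is not a Markov abstraction: there exist a timestep t, abstract states z_{t-1}, z_t, an action a_{t-1}, and x ∈ X with B_{φ,t}^{π(1)}(x | z_t, a_{t-1}, z_{t-1}) ≠ B_{φ,t}^π(x | z_t). In particular, the example with X = {x₀, x₁, x₂, x₃}, A = {a₀, a₁}, where a₁ deterministically sends x₀ ↦ x₁, x₁ ↦ x₁, x₂ ↦ x₂, x₃ ↦ x₂ and a₀ deterministically sends x₁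 ↦ x₃, x₂ ↦ x₀, x₀ ↦ x₀, x₃ ↦ x₃, with abstraction φ(x₁) = φ(x₂) = z_B, φ(x₀) = z_A, φ(x₃) = z_C, and the uniform random policy, witnesses this: the one-step abstract transition probability to z_A from (a₀, z_B) is 0.5, but conditioned additionally on (a₁, z_A) one step earlier it is 1. -/
/-!
In the example the action is determined by the abstract successor state: `a₁` always lands in
`z_B = {x₁, x₂}` and `a₀` never does. So, wherever they are defined, the ground and the abstract
inverse models are both the indicator of that action, whatever the initial distribution.
The abstraction is still not Markov: `z_A = {x₀}` pins down its ground state, so the history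
`(a₁, z_A)` puts all the belief in `z_B` on `x₁ = a₁(x₀)`, whereas under the uniform initial
distribution the belief over `z_B` without history is split evenly between `x₁` and `x₂`.
-/

namespace MarkovAbstraction

noncomputable section

variable {X A Z : Type*}

theorem div_sum_eq_ite_of_support_subsingleton [Fintype A] [DecidableEq A] {g : A → ℝ} {a₀ : A}
    (hg : ∀ b ≠ a₀, g b = 0) (hsum : 0 < ∑ b, g b) (a : A) :
    g a / ∑ b, g b = if a = a₀ then 1 else 0 := by
  rw [Finset.sum_eq_single a₀ (fun b _ hb => hg b hb) (by simp)] at hsum ⊢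
  split_ifs with ha
  · subst ha
    exact div_self hsum.ne'
  · rw [hg a ha, zero_div]

theorem invModel_eq_ite [Fintype A] [DecidableEq A] {T : X → A → X → ℝ} {π : ℕ → A → X → ℝ}
    {t : ℕ} {x x' : X} {a₀ : A} (hT : ∀ b, T x' b x ≠ 0 → b = a₀)
    (hpos : 0 < PNext T π t x' x) (a : A) :
    InvModel T π t a x' x = if a = a₀ then 1 else 0 :=
  div_sum_eq_ite_of_support_subsingleton
    (fun b hb => by rw [not_imp_comm.mp (hT b) hb, zero_mul]) hpos a

section Abstract

variable [Fintype X] [Fintype A] [DecidableEq Z] {T : X → A → X → ℝ} {π : ℕ → A → X → ℝ}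
  {P0 : X → ℝ} {φ : X → Z} {t : ℕ} {z z' : Z}

theorem bel0_eq_zero_of_ne {x : X} (hx : φ x ≠ z) : Bel0 T π P0 φ t z x = 0 := by
  rw [Bel0, if_neg hx, zero_div]

theorem tZ_eq_zero {b : A} (hT : ∀ x x', φ x = z → φ x' = z' → T x' b x = 0) :
    TZ T π P0 φ t z' b z = 0 :=
  Finset.sum_eq_zero fun x' _ => by
    split_ifs with hx'
    · exact Finset.sum_eq_zero fun x _ => by
        split_ifs with hx
        · rw [hT x x' hx hx', zero_mul]
        · rfl
    · rfl

theorem pZNext_eq_sum_tZ (hπ : InPolicyClass φ π) {x₀ : X} (hx₀ : φ x₀ = z) :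
    PZNext T π P0 φ t z' z = ∑ b, TZ T π P0 φ t z' b z * π t b x₀ := by
  have hterm : ∀ x x', PNext T π t x' x * Bel0 T π P0 φ t z x =
      ∑ b, (if φ x = z then T x' b x * Bel0 T π P0 φ t z x else 0) * π t b x₀ := by
    intro x x'
    by_cases hx : φ x = z
    · simp only [PNext, if_pos hx, Finset.sum_mul, hπ t _ x x₀ (hx.trans hx₀.symm)]
      exact Finset.sum_congr rfl fun b _ => by ring
    · simp only [bel0_eq_zero_of_ne hx, if_neg hx, mul_zero, zero_mul, Finset.sum_const_zero]
  simp only [PZNext, PNextZ, TZ, hterm, Finset.sum_mul, ite_mul, zero_mul]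
  rw [Finset.sum_comm]
  refine Finset.sum_congr rfl fun x' _ => ?_
  split_ifs
  · exact Finset.sum_comm
  · simp

theorem invModelZ_eq_ite [DecidableEq A] (hπ : InPolicyClass φ π) {x₀ : X} (hx₀ : φ x₀ = z)
    {a₀ : A} (hT : ∀ b x x', φ x = z → φ x' = z' → T x' b x ≠ 0 → b = a₀)
    (hpos : 0 < PZNext T π P0 φ t z' z) (a : A) :
    InvModelZ T π P0 φ t a z' z x₀ = if a = a₀ then 1 else 0 := by
  rw [pZNext_eq_sum_tZ hπ hx₀] at hpos
  rw [InvModelZ, pZNext_eq_sum_tZ hπ hx₀]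
  refine div_sum_eq_ite_of_support_subsingleton (fun b hb => ?_) hpos a
  rw [tZ_eq_zero fun x x' hx hx' => not_imp_comm.mp (hT b x x' hx hx') hb, zero_mul]

end Abstract

def detKernel [DecidableEq X] (f : A → X → X) : X → A → X → ℝ :=
  fun x' a x => if x' = f a x then 1 else 0

theorem isKernel_detKernel [Fintype X] [DecidableEq X] (f : A → X → X) :
    IsKernel (detKernel f) :=
  ⟨fun x' a x => by unfold detKernel; split_ifs <;> norm_num,
    fun a x => by simp [detKernel]⟩

theorem eq_of_detKernel_ne_zero [DecidableEq X] {f : A → X → X} {x x' : X} {a : A}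
    (h : detKernel f x' a x ≠ 0) : x' = f a x := by
  by_contra hne
  exact h (if_neg hne)

def uniformPolicy [Fintype A] : ℕ → A → X → ℝ := fun _ _ _ => 1 / Fintype.card A

theorem isPolicy_uniformPolicy [Fintype A] [Nonempty A] :
    IsPolicy (uniformPolicy : ℕ → A → X → ℝ) :=
  ⟨fun _ _ _ => by unfold uniformPolicy; positivity,
    fun _ _ => by simp [uniformPolicy]⟩

theorem inPolicyClass_uniformPolicy [Fintype A] (φ : X → Z) :
    InPolicyClass φ (uniformPolicy : ℕ → A → X → ℝ) :=
  fun _ _ _ _ _ => rfl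

def uniformDist [Fintype X] : X → ℝ := fun _ => 1 / Fintype.card X

theorem isDist_uniformDist [Fintype X] [Nonempty X] : IsDist (uniformDist : X → ℝ) :=
  ⟨fun _ => by unfold uniformDist; positivity, by simp [uniformDist]⟩

end

/-- States `xᵢ` and actions `aᵢ` are encoded as `i`, and `z_A, z_B, z_C` as `0, 1, 2`. -/
def exSucc : Fin 2 → Fin 4 → Fin 4 := ![![0, 3, 0, 3], ![1, 1, 2, 2]]

def exAbs : Fin 4 → Fin 3 := ![0, 1, 1, 2]

theorem exSucc_action_eq (a : Fin 2) (x : Fin 4) :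
    a = if exAbs (exSucc a x) = 1 then 1 else 0 := by
  revert a x
  decide

theorem ex_bel0 :
    Bel0 (detKernel exSucc) uniformPolicy uniformDist exAbs 0 1 1 = 1 / 2 := by
  simp [Bel0, Pvis, uniformDist, exAbs, Fin.sum_univ_four]
  norm_num

theorem ex_belK :
    BelK (detKernel exSucc) uniformPolicy uniformDist exAbs 0 [(1, 0)] 1 1 = 1 := by
  simp [BelK, Bel0, Pvis, detKernel, uniformDist, exSucc, exAbs, Fin.sum_univ_four]

/-- **Section 4.2 counterexample.** The Inverse Model condition alone is insufficient:
there is a finite MDP with deterministic transitions (the four-state, two-action example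
of Figure 3), an abstraction `φ`, an initial state distribution, and a policy `π ∈ Π_φ`
such that the Inverse Model condition holds at every timestep for which the relevant
denominators are positive, yet `φ` is not a Markov abstraction: some `1`-step belief
distribution differs from the `0`-step belief distribution. -/
theorem inverse_model_condition_insufficient :
    ∃ (T Rw : Fin 4 → Fin 2 → Fin 4 → ℝ) (γ : ℝ) (φ : Fin 4 → Fin 3)
      (π : ℕ → Fin 2 → Fin 4 → ℝ) (P0 : Fin 4 → ℝ),
      0 ≤ γ ∧ γ < 1 ∧
      IsKernel T ∧ IsPolicy π ∧ IsDist P0 ∧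
      -- deterministic transitions:
      (∀ (a : Fin 2) (x : Fin 4), ∃ x' : Fin 4,
        ∀ y : Fin 4, T y a x = if y = x' then 1 else 0) ∧
      -- π belongs to the policy class Π_φ:
      InPolicyClass φ π ∧
      -- (i) the Inverse Model condition holds whenever the relevant denominators are positive:
      (∀ (t : ℕ) (a : Fin 2) (z z' : Fin 3) (x x' : Fin 4), φ x = z → φ x' = z' →
        0 < PNext T π t x' x →
        0 < PZNext T π P0 φ t z' z →
        (0 < ∑ y : Fin 4, if φ y = z then Pvis T π P0 t y else 0) →
        InvModelZ T π P0 φ t a z' z x = InvModel T π t a x' x) ∧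
      -- (ii) φ is not a Markov abstraction:
      (∃ (t : ℕ) (a : Fin 2) (zprev zt : Fin 3) (x : Fin 4),
        BelK T π P0 φ t [(a, zprev)] zt x ≠ Bel0 T π P0 φ t zt x) := by
  refine ⟨detKernel exSucc, 0, 0, exAbs, uniformPolicy, uniformDist, le_rfl, one_pos,
    isKernel_detKernel exSucc, isPolicy_uniformPolicy, isDist_uniformDist,
    fun a x => ⟨exSucc a x, fun y => rfl⟩, inPolicyClass_uniformPolicy exAbs, ?_, ?_⟩
  · intro t a z z' x x' hx hx' hground habs _
    have hact : ∀ b y y', exAbs y' = z' → detKernel exSucc y' b y ≠ 0 →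
        b = if z' = 1 then 1 else 0 := by
      rintro b y y' rfl hT
      rw [eq_of_detKernel_ne_zero hT]
      exact exSucc_action_eq b y
    rw [invModelZ_eq_ite (inPolicyClass_uniformPolicy exAbs) hx
        (fun b y y' _ hy' => hact b y y' hy') habs,
      invModel_eq_ite (fun b => hact b x x' hx') hground]
  · refine ⟨0, 1, 0, 1, 1, ?_⟩
    rw [ex_belK, ex_bel0]
    norm_num

end MarkovAbstraction
end

section
/- (Appendix D example: a Markov abstraction need not be a kinematic inseparability abstraction.) There exist a finite MDP M = (X, A, R, T, γ), an abstraction φ : X → Z, and an initial distribution P_0 such that φ is a Markov abstraction over the policy class Π_φ (i.e. B_{φ,t}^{π(k)}(x | z_t, history) = B_{φ,t}^π(x | z_t) for all π ∈ Π_φ, all t, all k ≥ 1, all histories, and all x ∈ X), yet φ is not a kinematic inseparability abstraction: there exist x₁, x₂ ∈ X with φ(x₁) = φ(x₂), an action a ∈ A, and x' ∈ X with T(x'|a,x₁) ≠ T(x'|a,x₂). A witness is X = {x₀, x₁, x₂, x₃}, A = {a₀, a₁}, where action a₁ from every state transitions to x₁ or x₂ with probability 1/2 each, action a₀ deterministically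 sends x₁ ↦ x₃, x₂ ↦ x₀, x₀ ↦ x₀, x₃ ↦ x₃, and φ(x₁) = φ(x₂) = z_B, φ(x₀) = z_A, φ(x₃) = z_C. -/
namespace MarkovAbstraction

noncomputable section

variable {X A Z : Type*} [Fintype X] [Fintype A] [Fintype Z] [DecidableEq Z]

/-- Positivity of all the denominators appearing in the recursive definition of the
`k`-step belief distribution for a given history. -/
def BelKDenPos (T : X → A → X → ℝ) (π : ℕ → A → X → ℝ) (P0 : X → ℝ) (φ : X → Z)
    (t : ℕ) : List (A × Z) → Z → Prop
  | [], z => 0 < ∑ x : X, if φ x = z then Pvis T π P0 t x else 0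
  | (a, zp) :: h, z =>
      (0 < ∑ xt : X, if φ xt = z then
          ∑ xtp : X, if φ xtp = zp then T xt a xtp * BelK T π P0 φ t h zp xtp else 0
        else 0) ∧
      BelKDenPos T π P0 φ t h zp

end

/-!
In the example, `x₁` and `x₂` are indistinguishable as targets: `T(x₁|a,x) = T(x₂|a,x)` for every
`a` and `x`, i.e. `T(·|a,x)` factors through `φ`, and so does the uniform `P₀`. Hence everything
propagated forwards through `T` — the visitation distribution `P_t^π` and the numerator of every
`k`-step belief — is constant on each fibre of `φ`. Normalised over a fibre, a fibre-constant
function is the uniform distribution on that fibre, so every belief equals it, whatever the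
history. Forwards kinematic inseparability fails because `a₀` sends `x₁` to `x₃` but `x₂` to `x₀`.
-/

open Finset Function

section FiberNormalize

variable {X Z : Type*} [Fintype X] [DecidableEq Z]

noncomputable def fiberNormalize (φ : X → Z) (z : Z) (u : X → ℝ) (x : X) : ℝ :=
  (if φ x = z then u x else 0) / ∑ y, if φ y = z then u y else 0

theorem fiberNormalize_of_factorsThrough {φ : X → Z} {u : X → ℝ} (hu : u.FactorsThrough φ)
    {z : Z} (hsum : (∑ y, if φ y = z then u y else 0) ≠ 0) (x : X) :
    fiberNormalize φ z u x = if φ x = z then (#{y | φ y = z} : ℝ)⁻¹ else 0 := by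
  by_cases hx : φ x = z
  · have hsum_eq : (∑ y, if φ y = z then u y else 0) = #{y | φ y = z} * u x := by
      rw [← sum_filter, sum_congr rfl fun y hy => hu ((mem_filter.1 hy).2.trans hx.symm),
        sum_const, nsmul_eq_mul]
    have hux : u x ≠ 0 := by rintro h; simp [hsum_eq, h] at hsum
    rw [fiberNormalize, if_pos hx, if_pos hx, hsum_eq]
    field_simp
  · simp [fiberNormalize, hx]

end FiberNormalize

section Beliefs

variable {X A Z : Type*} [Fintype X] [Fintype A]
  {T : X → A → X → ℝ} {π : ℕ → A → X → ℝ} {P0 : X → ℝ} {φ : X → Z} {t : ℕ}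

theorem Pvis_factorsThrough (hT : ∀ a xp, FactorsThrough (fun x => T x a xp) φ)
    (hP0 : P0.FactorsThrough φ) (t : ℕ) : (Pvis T π P0 t).FactorsThrough φ := by
  intro x y hxy
  cases t with
  | zero => exact hP0 hxy
  | succ t => simp only [Pvis, hT _ _ hxy]

variable [DecidableEq Z]

theorem Bel0_eq_fiberNormalize (z : Z) :
    Bel0 T π P0 φ t z = fiberNormalize φ z (Pvis T π P0 t) :=
  rfl

theorem BelK_eq_zero_of_ne (h : List (A × Z)) {z : Z} {x : X} (hx : φ x ≠ z) :
    BelK T π P0 φ t h z x = 0 := by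
  cases h with
  | nil => simp [BelK, Bel0, hx]
  | cons p h => simp [BelK, hx]

theorem sum_ite_mul_BelK (h : List (A × Z)) (a : A) (zp : Z) (x : X) :
    (∑ xp, if φ xp = zp then T x a xp * BelK T π P0 φ t h zp xp else 0) =
      ∑ xp, T x a xp * BelK T π P0 φ t h zp xp := by
  refine sum_congr rfl fun xp _ => ?_
  split_ifs with hxp
  · rfl
  · rw [BelK_eq_zero_of_ne h hxp, mul_zero]

theorem BelK_cons_eq_fiberNormalize (h : List (A × Z)) (a : A) (zp z : Z) :
    BelK T π P0 φ t ((a, zp) :: h) z =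
      fiberNormalize φ z fun x => ∑ xp, T x a xp * BelK T π P0 φ t h zp xp := by
  ext x
  simp only [BelK, fiberNormalize, sum_ite_mul_BelK]

theorem BelK_eq_Bel0_of_factorsThrough (hT : ∀ a xp, FactorsThrough (fun x => T x a xp) φ)
    (hP0 : P0.FactorsThrough φ) {hist : List (A × Z)} (hne : hist ≠ []) {z : Z}
    (hden : BelKDenPos T π P0 φ t hist z)
    (hpos : 0 < ∑ y, if φ y = z then Pvis T π P0 t y else 0) (x : X) :
    BelK T π P0 φ t hist z x = Bel0 T π P0 φ t z x := by
  obtain ⟨⟨a, zp⟩, h, rfl⟩ := List.exists_cons_of_ne_nil hne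
  have hnum : FactorsThrough (fun x => ∑ xp, T x a xp * BelK T π P0 φ t h zp xp) φ :=
    fun x y hxy => by simp only [hT _ _ hxy]
  have hden' := hden.1
  simp only [sum_ite_mul_BelK] at hden'
  rw [BelK_cons_eq_fiberNormalize, Bel0_eq_fiberNormalize,
    fiberNormalize_of_factorsThrough hnum hden'.ne',
    fiberNormalize_of_factorsThrough (Pvis_factorsThrough hT hP0 t) hpos.ne']

end Beliefs

noncomputable section Example

def exampleT : Fin 4 → Fin 2 → Fin 4 → ℝ := fun x' a x =>
  if a = 0 then (if x' = ![0, 3, 0, 3] x then 1 else 0)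
  else if x' = 1 ∨ x' = 2 then 1 / 2 else 0

def exampleφ : Fin 4 → Fin 3 := ![0, 1, 1, 2]

def exampleP0 : Fin 4 → ℝ := fun _ => 1 / 4

theorem isKernel_exampleT : IsKernel exampleT := by
  refine ⟨fun x' a x => ?_, fun a x => ?_⟩
  · unfold exampleT
    split_ifs <;> norm_num
  · fin_cases a <;> fin_cases x <;> simp +decide [exampleT, Fin.sum_univ_four] <;> norm_num

theorem isDist_exampleP0 : IsDist exampleP0 :=
  ⟨fun _ => by norm_num [exampleP0], by norm_num [exampleP0]⟩

theorem exampleT_factorsThrough (a : Fin 2) (xp : Fin 4) :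
    FactorsThrough (fun x => exampleT x a xp) exampleφ := by
  intro x y hxy
  fin_cases x <;> fin_cases y <;> fin_cases a <;> fin_cases xp <;> simp_all +decide [exampleT]

end Example

/-- **Appendix D example.** A Markov abstraction need not be a kinematic inseparability
abstraction: there is a finite MDP (the four-state, two-action example of Figure 4) with
an abstraction `φ` and initial distribution such that `φ` is a Markov abstraction over
the policy class `Π_φ` (whenever the denominators involved are positive), yet forwards
kinematic inseparability fails for two ground states sharing an abstract state. -/
theorem markov_abstraction_not_kinematically_inseparable :
    ∃ (T Rw : Fin 4 → Fin 2 → Fin 4 → ℝ) (γ : ℝ) (φ : Fin 4 → Fin 3) (P0 : Fin 4 → ℝ),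
      0 ≤ γ ∧ γ < 1 ∧
      IsKernel T ∧ IsDist P0 ∧
      -- φ is a Markov abstraction over Π_φ:
      (∀ π : ℕ → Fin 2 → Fin 4 → ℝ, IsPolicy π → InPolicyClass φ π →
        ∀ (t : ℕ) (hist : List (Fin 2 × Fin 3)), hist ≠ [] →
          ∀ (z : Fin 3) (x : Fin 4),
            BelKDenPos T π P0 φ t hist z →
            (0 < ∑ y : Fin 4, if φ y = z then Pvis T π P0 t y else 0) →
            BelK T π P0 φ t hist z x = Bel0 T π P0 φ t z x) ∧
      -- yet φ is not a kinematic inseparability abstraction (forwards KI fails):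
      (∃ (x1 x2 : Fin 4) (a : Fin 2) (x' : Fin 4),
        φ x1 = φ x2 ∧ T x' a x1 ≠ T x' a x2) := by
  refine ⟨exampleT, fun _ _ _ => 0, 0, exampleφ, exampleP0, le_rfl, one_pos, isKernel_exampleT,
    isDist_exampleP0, fun π _ _ t hist hne z x hden hpos => ?_, 1, 2, 0, 3, rfl, by simp [exampleT]⟩
  exact BelK_eq_Bel0_of_factorsThrough exampleT_factorsThrough (fun _ _ _ => rfl) hne hden hpos x

end MarkovAbstraction
end
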